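/- For every integer n ≥ 1 and every integer l with 0 ≤ l ≤ 2^n, one has Σ^{2^n + l}_{n+1} = Σ^{2^n}_{n+1} − Σ^l_{n+1} (equivalently, with a(m,j) := −Σ^j_m, a(n+1, l + 2^n) = a(n+1, 2^n) − a(n+1, l)). -/

import Mathlib

/-!
Each column of the triangle is the sequence of prefix sums of the previous one,
`Σ^k_{m+1} = ∑_{i<k} Σ^i_m`. The Thue–Morse sequence is antiperiodic on blocks,
`u (2^n + j) = -u j` for `j < 2^n`, and prefix sums of a sequence antiperiodic on
`[0, 2p)` vanish at `2p`; hence by induction on `m` every column `m ≤ n` is still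
antiperiodic on `[0, 2^(n+1))`. Summing column `n` once more gives the identity.
-/

/-- The ±1 Thue–Morse sequence: `u n = (-1)^(s₂(n)+1)` where `s₂` is the binary digit sum. -/
def u (n : ℕ) : ℤ := (-1) ^ ((Nat.digits 2 n).sum + 1)

/-- The "Pascal triangle" associated to the Thue–Morse sequence:
`Sig k n` is `Σ^k_n` (k the superscript, n the subscript). -/
def Sig : ℕ → ℕ → ℤ
  | k, 0 => u k
  | 0, _ + 1 => 0
  | k + 1, n + 1 => Sig k n + Sig k (n + 1)

open Finset

lemma u_two_mul (k : ℕ) : u (2 * k) = u k := by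
  rcases Nat.eq_zero_or_pos k with rfl | hk
  · rfl
  · rw [u, u, Nat.digits_def' (by norm_num) (by omega), Nat.mul_mod_right,
      Nat.mul_div_cancel_left k two_pos, List.sum_cons, zero_add]

lemma u_two_mul_add_one (k : ℕ) : u (2 * k + 1) = -u k := by
  have hdiv : (2 * k + 1) / 2 = k := by omega
  rw [u, u, Nat.digits_def' (by norm_num) (by omega), Nat.mul_add_mod_self_left, hdiv,
    List.sum_cons, Nat.one_mod, add_comm 1, pow_succ, mul_neg_one]

lemma u_two_pow_add {n j : ℕ} (hj : j < 2 ^ n) : u (2 ^ n + j) = -u j := by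
  induction n generalizing j with
  | zero =>
    obtain rfl : j = 0 := by omega
    rfl
  | succ n ih =>
    obtain ⟨q, rfl | rfl⟩ := Nat.even_or_odd' j
    · have hq : q < 2 ^ n := by rw [pow_succ] at hj; omega
      rw [pow_succ', ← mul_add, u_two_mul, u_two_mul, ih hq]
    · have hq : q < 2 ^ n := by rw [pow_succ] at hj; omega
      rw [pow_succ', ← add_assoc, ← mul_add, u_two_mul_add_one, u_two_mul_add_one, ih hq]

lemma sig_succ_eq_sum_range (k m : ℕ) : Sig k (m + 1) = ∑ i ∈ range k, Sig i m := by
  induction k with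
  | zero => rfl
  | succ k ih => rw [sum_range_succ, ← ih, Sig, add_comm]

lemma sum_range_add_of_antiperiodic {M : Type*} [AddCommGroup M] {f : ℕ → M} {p j : ℕ}
    (hf : ∀ i < j, f (p + i) = -f i) :
    ∑ i ∈ range (p + j), f i = ∑ i ∈ range p, f i - ∑ i ∈ range j, f i := by
  rw [sum_range_add, sum_congr rfl fun i hi => hf i (mem_range.mp hi), sum_neg_distrib,
    sub_eq_add_neg]

lemma sig_two_pow_add {m n j : ℕ} (hm : m ≤ n) (hj : j < 2 ^ n) :
    Sig (2 ^ n + j) m = -Sig j m := by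
  induction m generalizing n j with
  | zero => simpa only [Sig] using u_two_pow_add hj
  | succ m ih =>
    obtain ⟨n, rfl⟩ : ∃ n', n = n' + 1 := ⟨n - 1, by omega⟩
    have block_sum : ∑ i ∈ range (2 ^ (n + 1)), Sig i m = 0 := by
      rw [pow_succ, mul_two, sum_range_add_of_antiperiodic fun i hi => ih (by omega) hi,
        sub_self]
    rw [sig_succ_eq_sum_range, sig_succ_eq_sum_range,
      sum_range_add_of_antiperiodic fun i hi => ih (by omega) (hi.trans hj), block_sum,
      zero_sub]

theorem sig_half_period_symmetry_general (n : ℕ) (l : ℕ) (hl : l ≤ 2 ^ n) :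
    Sig (2 ^ n + l) (n + 1) = Sig (2 ^ n) (n + 1) - Sig l (n + 1) := by
  simp only [sig_succ_eq_sum_range]
  exact sum_range_add_of_antiperiodic fun i hi => sig_two_pow_add le_rfl (by omega)

theorem sig_half_period_symmetry (n : ℕ) (hn : 1 ≤ n) (l : ℕ) (hl : l ≤ 2 ^ n) :
    Sig (2 ^ n + l) (n + 1) = Sig (2 ^ n) (n + 1) - Sig l (n + 1) :=
  sig_half_period_symmetry_general n l hl
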